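/- Let M be a Gröbner-coherent graded R-module and M' ⊆ M a finitely generated homogeneous submodule. Then the quotient M/M' is Gröbner-coherent. -/

import Mathlib

/-!
Everything is transported along the surjective graded map `f = mkQ : M → M/M'`, whose kernel
`M'` is finitely generated. A finitely generated (homogeneous) submodule `N` of the quotient
pulls back to a finitely generated (homogeneous) submodule `f⁻¹ N` of `M`; finite presentation
of `f⁻¹ N` descends to `N ≅ f⁻¹ N / M'`, and a Gröbner basis `s` of `f⁻¹ N` maps to a Gröbner
basis `f s` of `N`. For the latter, given `0 ≠ y = f z ∈ N` of degree `d`, the components of `z`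
above `d` lie in `M'`; discarding them yields `z' ∈ f⁻¹ N` with `f (ini z') = ini y`.
-/

open DirectSum

section Defs

variable {A : Type*} [CommRing A] (𝒜 : ℤ → AddSubgroup A) [GradedRing 𝒜]
variable {M : Type*} [AddCommGroup M] [Module A M] (ℳ : ℤ → AddSubgroup M)
  [DirectSum.Decomposition ℳ]

/-- The degree of an element of a graded object: the largest `n` whose homogeneous
component is nonzero (junk value for `x = 0`). -/
noncomputable def mdeg {σ M : Type*} [AddCommMonoid M] [SetLike σ M] [AddSubmonoidClass σ M]
    (ℳ : ℤ → σ) [DirectSum.Decomposition ℳ] (x : M) : ℤ :=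
  sSup {n : ℤ | (DirectSum.decompose ℳ x n : M) ≠ 0}

/-- The initial (top-degree) term of an element. -/
noncomputable def ini {σ M : Type*} [AddCommMonoid M] [SetLike σ M] [AddSubmonoidClass σ M]
    (ℳ : ℤ → σ) [DirectSum.Decomposition ℳ] (x : M) : M :=
  (DirectSum.decompose ℳ x (mdeg ℳ x) : M)

/-- The initial submodule of a submodule `N`: generated by initial terms of nonzero
elements of `N`. -/
def iniSub (N : Submodule A M) : Submodule A M :=
  Submodule.span A {m : M | ∃ x ∈ N, x ≠ 0 ∧ ini ℳ x = m}

/-- The ring grading is supported in non-negative degrees. -/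
def RingNonnegGraded : Prop := ∀ n < (0 : ℤ), ∀ a ∈ 𝒜 n, a = (0 : A)

/-- The module grading is bounded below. -/
def ModuleBddBelow : Prop := ∃ n₀ : ℤ, ∀ n < n₀, ∀ m ∈ ℳ n, m = (0 : M)

/-- A family of elements of `N` is a Gröbner basis for `N`. -/
def IsGrobnerBasis {I : Type*} (N : Submodule A M) (x : I → M) : Prop :=
  (∀ i, x i ∈ N) ∧
    Submodule.span A (Set.range fun i => ini ℳ (x i)) = iniSub ℳ N

/-- `a` gives a reduced expression `y = ∑ aᵢ xᵢ` with `deg aᵢ + deg xᵢ ≤ deg y`. -/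
def IsReducedExpr {I : Type*} (x : I → M) (y : M) (a : I →₀ A) : Prop :=
  y = a.sum (fun i c => c • x i) ∧
    ∀ i ∈ a.support, mdeg 𝒜 (a i) + mdeg ℳ (x i) ≤ mdeg ℳ y

/-- Set version of a Gröbner basis. -/
def IsGrobnerBasisSet (N : Submodule A M) (s : Set M) : Prop :=
  s ⊆ (N : Set M) ∧ Submodule.span A (ini ℳ '' s) = iniSub ℳ N

/-- `y` has a reduced expression in terms of the elements of `s`. -/
def HasReducedExprSet (s : Set M) (y : M) : Prop :=
  ∃ a : M →₀ A, ↑a.support ⊆ s ∧ y = a.sum (fun m c => c • m) ∧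
    ∀ m ∈ a.support, mdeg 𝒜 (a m) + mdeg ℳ m ≤ mdeg ℳ y

/-- A submodule is homogeneous when it contains all homogeneous components of its
elements. -/
def IsHomogSubmodule (N : Submodule A M) : Prop :=
  ∀ x ∈ N, ∀ n : ℤ, (DirectSum.decompose ℳ x n : M) ∈ N

/-- Graded-coherent: finitely generated, and every finitely generated homogeneous
submodule is finitely presented. -/
def GradedCoherent : Prop :=
  Module.Finite A M ∧ ∀ N : Submodule A M, N.FG → IsHomogSubmodule ℳ N →
    Module.FinitePresentation A N

/-- Gröbner-coherent: graded-coherent, and every finitely generated (possibly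
inhomogeneous) submodule admits a finite Gröbner basis. -/
def GrobnerCoherent : Prop :=
  GradedCoherent (A := A) ℳ ∧ ∀ N : Submodule A M, N.FG →
    ∃ s : Finset M, IsGrobnerBasisSet ℳ N ↑s

/-- A homogeneous generating family of syzygies of the initial terms of the `x i`
(with the free module graded by `deg eᵢ = deg xᵢ`). -/
def IsHomogSyzygyGens {I J : Type*} (x : I → M) (c : J → I →₀ A) : Prop :=
  (∀ j, ∃ d : ℤ, ∀ i, c j i ∈ 𝒜 (d - mdeg ℳ (x i))) ∧
    Submodule.span A (Set.range c) =
      LinearMap.ker (Finsupp.linearCombination A fun i => ini ℳ (x i))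

/-- Set version of a homogeneous generating set of syzygies of initial terms. -/
def IsHomogSyzygyGensSet (X : Set M) (C : Set (M →₀ A)) : Prop :=
  (∀ c ∈ C, ↑c.support ⊆ X) ∧
  (∀ c ∈ C, ∃ d : ℤ, ∀ m : M, c m ∈ 𝒜 (d - mdeg ℳ m)) ∧
  Submodule.span A C =
    Finsupp.supported A A X ⊓
      LinearMap.ker (Finsupp.linearCombination A fun m : M => ini ℳ m)

/-- The elements `z = ∑ c m • m` attached to a set of syzygies `C`. -/
def zElems (C : Set (M →₀ A)) : Set M :=
  (fun c : M →₀ A => c.sum fun m coeff => coeff • m) '' C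

/-- One step of Buchberger's algorithm: adjoin the `z`-elements of a homogeneous
generating set of syzygies. -/
def BuchbergerStep (X Y : Set M) : Prop :=
  ∃ C : Set (M →₀ A), IsHomogSyzygyGensSet 𝒜 ℳ X C ∧ Y = X ∪ zElems C

end Defs

section Decomposition

variable {σ M : Type*} [AddCommMonoid M] [SetLike σ M] [AddSubmonoidClass σ M]
  {ℳ : ℤ → σ} [DirectSum.Decomposition ℳ]

theorem eq_of_decompose_eq {x y : M}
    (h : ∀ n, (decompose ℳ x n : M) = decompose ℳ y n) : x = y :=
  (decompose ℳ).injective <| DFinsupp.ext fun n => Subtype.ext (h n)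

theorem finite_setOf_decompose_ne_zero (x : M) :
    {n : ℤ | (decompose ℳ x n : M) ≠ 0}.Finite := by
  classical
  exact (decompose ℳ x).support.finite_toSet.subset fun n hn =>
    DFinsupp.mem_support_iff.mpr fun h => hn (by rw [h]; rfl)

theorem le_mdeg_of_decompose_ne_zero {x : M} {n : ℤ} (h : (decompose ℳ x n : M) ≠ 0) :
    n ≤ mdeg ℳ x :=
  le_csSup (finite_setOf_decompose_ne_zero x).bddAbove h

theorem decompose_eq_zero_of_mdeg_lt {x : M} {n : ℤ} (h : mdeg ℳ x < n) :
    (decompose ℳ x n : M) = 0 :=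
  not_not.mp fun hn => (le_mdeg_of_decompose_ne_zero hn).not_gt h

theorem mdeg_eq_of_isGreatest {x : M} {d : ℤ}
    (h : IsGreatest {n : ℤ | (decompose ℳ x n : M) ≠ 0} d) : mdeg ℳ x = d :=
  h.csSup_eq

theorem ini_ne_zero {x : M} (hx : x ≠ 0) : ini ℳ x ≠ 0 := by
  have hne : {n : ℤ | (decompose ℳ x n : M) ≠ 0}.Nonempty := by
    by_contra! h
    refine hx (eq_of_decompose_eq (ℳ := ℳ) fun n => ?_)
    rw [decompose_zero]
    exact not_not.mp (Set.eq_empty_iff_forall_notMem.mp h n)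
  exact hne.csSup_mem (finite_setOf_decompose_ne_zero x)

variable (ℳ) in
@[simp]
theorem ini_zero : ini ℳ (0 : M) = 0 := by
  simp [ini]

end Decomposition

section GradedMap

variable {σ τ M N F : Type*} [AddCommMonoid M] [SetLike σ M] [AddSubmonoidClass σ M]
  [AddCommMonoid N] [SetLike τ N] [AddSubmonoidClass τ N]
  {ℳ : ℤ → σ} [DirectSum.Decomposition ℳ] {𝒩 : ℤ → τ} [DirectSum.Decomposition 𝒩]
  [FunLike F M N] [AddMonoidHomClass F M N] {f : F}

theorem decompose_map_of_mem (hf : ∀ n, ∀ x ∈ ℳ n, f x ∈ 𝒩 n) (x : M) (n : ℤ) :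
    (decompose 𝒩 (f x) n : N) = f (decompose ℳ x n) := by
  classical
  conv_lhs => rw [← sum_support_decompose ℳ x, map_sum, decompose_sum]
  rw [DFinsupp.finsetSum_apply, AddSubmonoidClass.coe_finsetSum]
  by_cases hn : n ∈ (decompose ℳ x).support
  · refine (Finset.sum_eq_single_of_mem n hn fun m _ hmn => ?_).trans ?_
    · exact decompose_of_mem_ne 𝒩 (hf _ _ (SetLike.coe_mem _)) hmn
    · exact decompose_of_mem_same 𝒩 (hf _ _ (SetLike.coe_mem _))
  · rw [DFinsupp.notMem_support_iff.mp hn, ZeroMemClass.coe_zero, map_zero]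
    exact Finset.sum_eq_zero fun m hm =>
      decompose_of_mem_ne 𝒩 (hf _ _ (SetLike.coe_mem _)) (ne_of_mem_of_not_mem hm hn)

theorem ini_map_of_map_ini_ne_zero (hf : ∀ n, ∀ x ∈ ℳ n, f x ∈ 𝒩 n) {x : M}
    (hx : f (ini ℳ x) ≠ 0) : ini 𝒩 (f x) = f (ini ℳ x) := by
  have hdeg : mdeg 𝒩 (f x) = mdeg ℳ x := by
    refine mdeg_eq_of_isGreatest ⟨?_, fun n hn => ?_⟩
    · rwa [Set.mem_ofPred_eq, decompose_map_of_mem hf]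
    · rw [Set.mem_ofPred_eq, decompose_map_of_mem hf] at hn
      exact le_mdeg_of_decompose_ne_zero fun h => hn (by rw [h, map_zero])
  rw [ini, hdeg, decompose_map_of_mem hf, ini]

theorem exists_map_eq_and_map_ini_eq (hf : ∀ n, ∀ x ∈ ℳ n, f x ∈ 𝒩 n) {z : M}
    (hz : f z ≠ 0) : ∃ z', f z' = f z ∧ f (ini ℳ z') = ini 𝒩 (f z) := by
  classical
  set d := mdeg 𝒩 (f z)
  set z' := (decompose ℳ).symm ((decompose ℳ z).filter (· ≤ d))
  have hz' : ∀ n, (decompose ℳ z' n : M) = if n ≤ d then (decompose ℳ z n : M) else 0 := by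
    intro n
    rw [Equiv.apply_symm_apply, DFinsupp.filter_apply]
    split_ifs <;> rfl
  have htop : f (decompose ℳ z d) = ini 𝒩 (f z) := (decompose_map_of_mem hf z d).symm
  have hmap : f z' = f z := eq_of_decompose_eq (ℳ := 𝒩) fun n => by
    rw [decompose_map_of_mem hf, decompose_map_of_mem hf, hz']
    split_ifs with hn
    · rfl
    · rw [map_zero, ← decompose_map_of_mem hf, decompose_eq_zero_of_mdeg_lt (not_le.mp hn)]
  have hdeg : mdeg ℳ z' = d := by
    refine mdeg_eq_of_isGreatest ⟨?_, fun n hn => ?_⟩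
    · rw [Set.mem_ofPred_eq, hz', if_pos le_rfl]
      exact fun h => ini_ne_zero hz (by rw [← htop, h, map_zero])
    · by_contra hnd
      exact hn (by rw [hz', if_neg hnd])
  exact ⟨z', hmap, by rw [ini, hdeg, hz', if_pos le_rfl, htop]⟩

end GradedMap

section SurjectiveGradedMap

variable {A M Q : Type*} [CommRing A] [AddCommGroup M] [Module A M] [AddCommGroup Q]
  [Module A Q] {ℳ : ℤ → AddSubgroup M} [DirectSum.Decomposition ℳ]
  {𝒬 : ℤ → AddSubgroup Q} [DirectSum.Decomposition 𝒬] {f : M →ₗ[A] Q}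

theorem IsHomogSubmodule.comap (hf : ∀ n, ∀ x ∈ ℳ n, f x ∈ 𝒬 n) {N : Submodule A Q}
    (hN : IsHomogSubmodule 𝒬 N) : IsHomogSubmodule ℳ (N.comap f) := fun x hx n => by
  rw [Submodule.mem_comap, ← decompose_map_of_mem hf]
  exact hN _ hx n

theorem Submodule.FG.comap_of_surjective {N : Submodule A Q} (hN : N.FG)
    (hsurj : Function.Surjective f) (hker : (LinearMap.ker f).FG) : (N.comap f).FG := by
  have hcomp := Submodule.fg_ker_comp f N.mkQ hker (by rwa [Submodule.ker_mkQ]) hsurj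
  rwa [LinearMap.ker_comp, Submodule.ker_mkQ] at hcomp

theorem Module.FinitePresentation.of_comap (hsurj : Function.Surjective f)
    (hker : (LinearMap.ker f).FG) (N : Submodule A Q)
    [Module.FinitePresentation A (N.comap f)] : Module.FinitePresentation A N := by
  refine Module.finitePresentation_of_surjective (f.submoduleComap N)
    (f.submoduleComap_surjective_of_surjective N hsurj) ?_
  have hkerComap : LinearMap.ker (f.submoduleComap N) =
      (LinearMap.ker f).comap (N.comap f).subtype := by
    ext x
    simp [Subtype.ext_iff]
  rw [hkerComap]
  refine Submodule.fg_of_fg_map_injective _ (Submodule.subtype_injective _) ?_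
  rwa [Submodule.map_comap_subtype, inf_eq_right.mpr (LinearMap.ker_le_comap f)]

theorem GradedCoherent.of_surjective (hsurj : Function.Surjective f)
    (hf : ∀ n, ∀ x ∈ ℳ n, f x ∈ 𝒬 n) (hker : (LinearMap.ker f).FG)
    (h : GradedCoherent (A := A) ℳ) : GradedCoherent (A := A) 𝒬 := by
  obtain ⟨hfin, hfp⟩ := h
  refine ⟨Module.Finite.of_surjective f hsurj, fun N hN hNhom => ?_⟩
  have := hfp _ (hN.comap_of_surjective hsurj hker) (hNhom.comap hf)
  exact Module.FinitePresentation.of_comap hsurj hker N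

theorem span_map_ini_le_span_ini_map (hf : ∀ n, ∀ x ∈ ℳ n, f x ∈ 𝒬 n) (s : Set M) :
    Submodule.span A (f '' (ini ℳ '' s)) ≤ Submodule.span A (ini 𝒬 '' (f '' s)) := by
  rw [Submodule.span_le]
  rintro _ ⟨_, ⟨x, hx, rfl⟩, rfl⟩
  by_cases h0 : f (ini ℳ x) = 0
  · rw [h0]
    exact zero_mem _
  · rw [← ini_map_of_map_ini_ne_zero hf h0]
    exact Submodule.subset_span ⟨f x, ⟨x, hx, rfl⟩, rfl⟩

theorem IsGrobnerBasisSet.image (hsurj : Function.Surjective f)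
    (hf : ∀ n, ∀ x ∈ ℳ n, f x ∈ 𝒬 n) {N : Submodule A Q} {s : Set M}
    (hs : IsGrobnerBasisSet ℳ (N.comap f) s) : IsGrobnerBasisSet 𝒬 N (f '' s) := by
  obtain ⟨hsN, hspan⟩ := hs
  refine ⟨Set.image_subset_iff.mpr hsN, le_antisymm ?_ ?_⟩
  · rw [Submodule.span_le]
    rintro _ ⟨_, ⟨x, hx, rfl⟩, rfl⟩
    by_cases h0 : f x = 0
    · rw [h0, ini_zero]
      exact zero_mem _
    · exact Submodule.subset_span ⟨f x, hsN hx, h0, rfl⟩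
  · rw [iniSub, Submodule.span_le]
    rintro _ ⟨y, hyN, hy0, rfl⟩
    obtain ⟨z, rfl⟩ := hsurj y
    obtain ⟨z', hz'z, hini⟩ := exists_map_eq_and_map_ini_eq hf hy0
    have hz'0 : z' ≠ 0 := fun h => hy0 (by rw [← hz'z, h, map_zero])
    have hz'N : ini ℳ z' ∈ Submodule.span A (ini ℳ '' s) := by
      rw [hspan]
      exact Submodule.subset_span ⟨z', by rwa [Submodule.mem_comap, hz'z], hz'0, rfl⟩
    refine span_map_ini_le_span_ini_map hf s ?_
    rw [← Submodule.map_span, ← hini]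
    exact Submodule.mem_map_of_mem hz'N

theorem GrobnerCoherent.of_surjective (hsurj : Function.Surjective f)
    (hf : ∀ n, ∀ x ∈ ℳ n, f x ∈ 𝒬 n) (hker : (LinearMap.ker f).FG)
    (h : GrobnerCoherent (A := A) ℳ) : GrobnerCoherent (A := A) 𝒬 := by
  classical
  obtain ⟨hcoh, hgb⟩ := h
  refine ⟨hcoh.of_surjective hsurj hf hker, fun N hN => ?_⟩
  obtain ⟨s, hs⟩ := hgb _ (hN.comap_of_surjective hsurj hker)
  exact ⟨s.image f, by simpa only [Finset.coe_image] using hs.image hsurj hf⟩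

end SurjectiveGradedMap

theorem stmt_7_general {A M : Type*} [CommRing A]
    [AddCommGroup M] [Module A M] (ℳ : ℤ → AddSubgroup M) [DirectSum.Decomposition ℳ]
    (h : GrobnerCoherent (A := A) ℳ)
    (M' : Submodule A M) (hfg : M'.FG)
    (ℳQ : ℤ → AddSubgroup (M ⧸ M')) [DirectSum.Decomposition ℳQ]
    (hcompat : ∀ n : ℤ, ℳQ n = (ℳ n).map M'.mkQ.toAddMonoidHom) :
    GrobnerCoherent (A := A) ℳQ :=
  h.of_surjective M'.mkQ_surjective
    (fun n x hx => hcompat n ▸ AddSubgroup.mem_map_of_mem _ hx)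
    (by rwa [Submodule.ker_mkQ])

/-- The quotient of a Gröbner-coherent module by a finitely generated homogeneous
submodule is Gröbner-coherent (with the induced grading). -/
theorem stmt_7 {A M : Type*} [CommRing A] (𝒜 : ℤ → AddSubgroup A) [GradedRing 𝒜]
    [AddCommGroup M] [Module A M] (ℳ : ℤ → AddSubgroup M) [DirectSum.Decomposition ℳ]
    [SetLike.GradedSMul 𝒜 ℳ]
    (hA : RingNonnegGraded 𝒜) (hM : ModuleBddBelow ℳ)
    (h : GrobnerCoherent (A := A) ℳ)
    (M' : Submodule A M) (hfg : M'.FG) (hhom : IsHomogSubmodule ℳ M')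
    (ℳQ : ℤ → AddSubgroup (M ⧸ M')) [DirectSum.Decomposition ℳQ]
    (hcompat : ∀ n : ℤ, ℳQ n = (ℳ n).map M'.mkQ.toAddMonoidHom) :
    GrobnerCoherent (A := A) ℳQ :=
  stmt_7_general ℳ h M' hfg ℳQ hcompat
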